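/- arXiv:2306.15709 — 3 statements merged into one kernel-verified Lean document; each statement's English description precedes it below -/
import Mathlib

section
/- Let Q = Θ B̄ Θᵀ with Θ a membership matrix (all communities nonempty) and B̄ symmetric invertible, and let V ∈ ℝ^{n×K} consist of K orthonormal eigenvectors of Q spanning the column space of Q. Then there exists X ∈ ℝ^{K×K} with V = Θ X; moreover, if g_i = g_j then the i-th and j-th rows of V coincide, and if g_i ≠ g_j then ‖V_{i·} − V_{j·}‖₂ = √(1/n_{g_i} + 1/n_{g_j}). -/
open Matrix

/-- Let `Q = Θ B̄ Θᵀ` with `Θ` a membership matrix (all communities nonempty) and `B̄`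
symmetric invertible, and let `V` consist of `K` orthonormal eigenvectors of `Q`
spanning its column space (so `Q = V D Vᵀ` with nonzero eigenvalues `d`).  Then
`V = Θ X` for some `X`; rows of `V` in the same community coincide, and rows in
different communities are at Euclidean distance `√(1/n_{g i} + 1/n_{g j})`. -/
theorem stmt9 (n K : ℕ) (g : Fin n → Fin K)
    (hk : ∀ k, 0 < (Finset.univ.filter (fun i => g i = k)).card)
    (Bbar : Matrix (Fin K) (Fin K) ℝ) (hBsym : Bbar.IsSymm) (hBinv : IsUnit Bbar)
    (Θ : Matrix (Fin n) (Fin K) ℝ) (hΘ : ∀ i k, Θ i k = if g i = k then 1 else 0)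
    (Q : Matrix (Fin n) (Fin n) ℝ) (hQ : Q = Θ * Bbar * Θᵀ)
    (V : Matrix (Fin n) (Fin K) ℝ) (d : Fin K → ℝ)
    (hV : Vᵀ * V = 1) (hd : ∀ k, d k ≠ 0)
    (hQV : Q = V * Matrix.diagonal d * Vᵀ) :
    (∃ X : Matrix (Fin K) (Fin K) ℝ, V = Θ * X) ∧
    (∀ i j, g i = g j → ∀ k, V i k = V j k) ∧
    (∀ i j, g i ≠ g j →
      Real.sqrt (∑ k, (V i k - V j k) ^ 2) =
        Real.sqrt (1 / (Finset.univ.filter (fun i' => g i' = g i)).card +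
                   1 / (Finset.univ.filter (fun i' => g i' = g j)).card)) := by
  set nk : Fin K → ℝ := fun k => ((Finset.univ.filter (fun i => g i = k)).card : ℝ) with hnkdef
  have hnkpos : ∀ k, 0 < nk k := by
    intro k
    show (0:ℝ) < ((Finset.univ.filter (fun i => g i = k)).card : ℝ)
    exact_mod_cast hk k
  have hnkne : ∀ k, nk k ≠ 0 := fun k => (hnkpos k).ne'
  -- Θᵀ Θ = diagonal nk
  have hTT : Θᵀ * Θ = Matrix.diagonal nk := by
    ext k l
    simp only [Matrix.mul_apply, Matrix.transpose_apply, hΘ, Matrix.diagonal]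
    by_cases hkl : k = l
    · subst hkl
      have h1 : ∀ x ∈ Finset.univ, ((if g x = k then (1:ℝ) else 0) * (if g x = k then 1 else 0))
          = if g x = k then (1:ℝ) else 0 := by
        intro x _; by_cases h : g x = k <;> simp [h]
      rw [Finset.sum_congr rfl h1, Finset.sum_boole, Matrix.of_apply, if_pos rfl]
    · rw [Matrix.of_apply, if_neg hkl]
      apply Finset.sum_eq_zero
      intro i _
      by_cases h : g i = k
      · rw [if_pos h, if_neg (h ▸ hkl), mul_zero]
      · rw [if_neg h, zero_mul]
  -- Q V = V diag d
  have hQVeq : Q * V = V * Matrix.diagonal d := by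
    rw [hQV, Matrix.mul_assoc, hV, Matrix.mul_one]
  set X : Matrix (Fin K) (Fin K) ℝ :=
    Bbar * Θᵀ * V * Matrix.diagonal (fun k => (d k)⁻¹) with hXdef
  have hVX : V = Θ * X := by
    have h : Θ * X = Q * V * Matrix.diagonal (fun k => (d k)⁻¹) := by
      rw [hXdef, hQ]; simp only [Matrix.mul_assoc]
    rw [h, hQVeq, Matrix.mul_assoc, Matrix.diagonal_mul_diagonal]
    have : (fun k => d k * (d k)⁻¹) = fun _ => (1:ℝ) := by
      funext k; exact mul_inv_cancel₀ (hd k)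
    rw [this, Matrix.diagonal_one, Matrix.mul_one]
  clear hXdef
  clear_value X
  -- Xᵀ diag nk X = 1
  have hXNX : Xᵀ * Matrix.diagonal nk * X = 1 := by
    have h : Xᵀ * Θᵀ * (Θ * X) = 1 := by
      rw [← Matrix.transpose_mul, ← hVX, hV]
    rw [← hTT]
    calc Xᵀ * (Θᵀ * Θ) * X = Xᵀ * Θᵀ * (Θ * X) := by simp only [Matrix.mul_assoc]
      _ = 1 := h
  set s : Fin K → ℝ := fun k => Real.sqrt (nk k) with hsdef
  have hsne : ∀ k, s k ≠ 0 := fun k => Real.sqrt_ne_zero'.mpr (hnkpos k)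
  have hss : Matrix.diagonal s * Matrix.diagonal s = Matrix.diagonal nk := by
    rw [Matrix.diagonal_mul_diagonal]
    exact congrArg Matrix.diagonal (funext fun k => Real.mul_self_sqrt (hnkpos k).le)
  -- Y = diag s * X is orthogonal
  have hYtY : (Matrix.diagonal s * X)ᵀ * (Matrix.diagonal s * X) = 1 := by
    rw [Matrix.transpose_mul, Matrix.diagonal_transpose]
    calc Xᵀ * Matrix.diagonal s * (Matrix.diagonal s * X)
        = Xᵀ * (Matrix.diagonal s * Matrix.diagonal s) * X := by simp only [Matrix.mul_assoc]
      _ = 1 := by rw [hss]; exact hXNX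
  have hYYt : (Matrix.diagonal s * X) * (Matrix.diagonal s * X)ᵀ = 1 :=
    mul_eq_one_comm.mp hYtY
  have hsinv : Matrix.diagonal (fun k => (s k)⁻¹) * Matrix.diagonal s = 1 := by
    rw [Matrix.diagonal_mul_diagonal]
    have : (fun k => (s k)⁻¹ * s k) = fun _ => (1:ℝ) := by
      funext k; exact inv_mul_cancel₀ (hsne k)
    rw [this, Matrix.diagonal_one]
  have hsinv' : Matrix.diagonal s * Matrix.diagonal (fun k => (s k)⁻¹) = 1 := by
    rw [Matrix.diagonal_mul_diagonal]
    have : (fun k => s k * (s k)⁻¹) = fun _ => (1:ℝ) := by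
      funext k; exact mul_inv_cancel₀ (hsne k)
    rw [this, Matrix.diagonal_one]
  have hXXt : X * Xᵀ = Matrix.diagonal (fun k => (nk k)⁻¹) := by
    have h1 : Matrix.diagonal s * (X * Xᵀ) * Matrix.diagonal s = 1 := by
      calc Matrix.diagonal s * (X * Xᵀ) * Matrix.diagonal s
          = (Matrix.diagonal s * X) * (Matrix.diagonal s * X)ᵀ := by
            rw [Matrix.transpose_mul, Matrix.diagonal_transpose]; simp only [Matrix.mul_assoc]
        _ = 1 := hYYt
    have h2 : Matrix.diagonal (fun k => (s k)⁻¹) *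
        (Matrix.diagonal s * (X * Xᵀ) * Matrix.diagonal s) *
        Matrix.diagonal (fun k => (s k)⁻¹) = X * Xᵀ := by
      calc Matrix.diagonal (fun k => (s k)⁻¹) *
          (Matrix.diagonal s * (X * Xᵀ) * Matrix.diagonal s) *
          Matrix.diagonal (fun k => (s k)⁻¹)
          = (Matrix.diagonal (fun k => (s k)⁻¹) * Matrix.diagonal s) * (X * Xᵀ) *
            (Matrix.diagonal s * Matrix.diagonal (fun k => (s k)⁻¹)) := by simp only [Matrix.mul_assoc]
        _ = X * Xᵀ := by rw [hsinv, hsinv', Matrix.one_mul, Matrix.mul_one]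
    rw [← h2, h1, Matrix.mul_one, Matrix.diagonal_mul_diagonal]
    exact congrArg Matrix.diagonal (funext fun k => by
      rw [← mul_inv, Real.mul_self_sqrt (hnkpos k).le])
  -- rows of V
  have hrow : ∀ i k, V i k = X (g i) k := by
    intro i k
    rw [hVX]
    simp [Matrix.mul_apply, hΘ, ite_mul]
  refine ⟨⟨X, hVX⟩, fun i j hij k => by rw [hrow, hrow, hij], ?_⟩
  intro i j hij
  congr 1
  have expand : ∀ k, (V i k - V j k)^2
      = X (g i) k * X (g i) k - 2 * (X (g i) k * X (g j) k) + X (g j) k * X (g j) k := by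
    intro k; rw [hrow, hrow]; ring
  rw [Finset.sum_congr rfl (fun k _ => expand k), Finset.sum_add_distrib,
    Finset.sum_sub_distrib, ← Finset.mul_sum]
  have hdiag : ∀ a b : Fin K, ∑ k, X a k * X b k = Matrix.diagonal (fun k => (nk k)⁻¹) a b := by
    intro a b
    rw [← hXXt]
    simp [Matrix.mul_apply, Matrix.transpose_apply]
  rw [hdiag, hdiag, hdiag, Matrix.diagonal_apply_eq, Matrix.diagonal_apply_eq,
    Matrix.diagonal_apply_ne _ hij]
  simp [hnkdef, one_div]
end

section
/- Let Q ∈ ℝ^{n×n} be symmetric of rank K with smallest nonzero eigenvalue (in absolute value) γ > 0, let M be any symmetric n×n matrix, and let Û, U ∈ ℝ^{n×K} have orthonormal columns consisting of the K leading eigenvectors of M and Q respectively. Then there exists an orthogonal matrix O ∈ O(K) such that ‖Û − U O‖_F ≤ 2√(2K)·‖M − Q‖₂ / γ. -/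
open Matrix

/-- Euclidean norm of a plain vector. -/
noncomputable def nrm {m : ℕ} (x : Fin m → ℝ) : ℝ :=
  ‖(WithLp.equiv 2 (Fin m → ℝ)).symm x‖

lemma dot_self_nonneg {m : ℕ} (x : Fin m → ℝ) : 0 ≤ x ⬝ᵥ x :=
  Finset.sum_nonneg fun _ _ => mul_self_nonneg _

lemma nrm_eq_sqrt {m : ℕ} (x : Fin m → ℝ) : nrm x = Real.sqrt (x ⬝ᵥ x) := by
  rw [nrm, EuclideanSpace.norm_eq]
  congr 1
  simp [dotProduct, Real.norm_eq_abs, sq_abs, pow_two]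

lemma nrm_nonneg {m : ℕ} (x : Fin m → ℝ) : 0 ≤ nrm x := norm_nonneg _

lemma nrm_sq {m : ℕ} (x : Fin m → ℝ) : nrm x ^ 2 = x ⬝ᵥ x := by
  rw [nrm_eq_sqrt, Real.sq_sqrt (dot_self_nonneg x)]

lemma nrm_add_le {m : ℕ} (x y : Fin m → ℝ) : nrm (x + y) ≤ nrm x + nrm y := by
  simpa [nrm] using norm_add_le ((WithLp.equiv 2 (Fin m → ℝ)).symm x)
    ((WithLp.equiv 2 (Fin m → ℝ)).symm y)

lemma nrm_smul {m : ℕ} (c : ℝ) (x : Fin m → ℝ) : nrm (c • x) = |c| * nrm x := by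
  simpa [nrm, Real.norm_eq_abs] using norm_smul c ((WithLp.equiv 2 (Fin m → ℝ)).symm x)

lemma nrm_neg {m : ℕ} (x : Fin m → ℝ) : nrm (-x) = nrm x := by
  simpa [nrm] using norm_neg ((WithLp.equiv 2 (Fin m → ℝ)).symm x)

lemma sqle {a b : ℝ} (hb : 0 ≤ b) (h : a ^ 2 ≤ b ^ 2) (ha : 0 ≤ a) : a ≤ b := by
  nlinarith

/-- Spectral norm (ℓ₂ operator norm) of a real square matrix. -/
noncomputable def specNorm {n : ℕ} (M : Matrix (Fin n) (Fin n) ℝ) : ℝ :=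
  ‖Matrix.toEuclideanCLM (𝕜 := ℝ) M‖

/-- Frobenius norm of a real matrix. -/
noncomputable def frobNorm {m k : ℕ} (M : Matrix (Fin m) (Fin k) ℝ) : ℝ :=
  Real.sqrt (∑ i, ∑ j, (M i j) ^ 2)

set_option synthInstance.maxHeartbeats 1000000 in
lemma nrm_mulVec_le {n : ℕ} (A : Matrix (Fin n) (Fin n) ℝ) (v : Fin n → ℝ) :
    nrm (A *ᵥ v) ≤ specNorm A * nrm v := by
  have h := ContinuousLinearMap.le_opNorm (Matrix.toEuclideanCLM (𝕜 := ℝ) A)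
    ((WithLp.equiv 2 (Fin n → ℝ)).symm v)
  rw [WithLp.equiv_symm_apply, Matrix.toEuclideanCLM_toLp] at h
  simpa [nrm, specNorm] using h

lemma dot_mulVec_left {a b : ℕ} (A : Matrix (Fin a) (Fin b) ℝ) (x : Fin b → ℝ) (y : Fin a → ℝ) :
    (A *ᵥ x) ⬝ᵥ y = x ⬝ᵥ (Aᵀ *ᵥ y) := by
  rw [← Matrix.vecMul_transpose, Matrix.dotProduct_mulVec]

lemma proj_dot {n : ℕ} (P : Matrix (Fin n) (Fin n) ℝ) (hs : Pᵀ = P) (hi : P * P = P)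
    (x : Fin n → ℝ) : (P *ᵥ x) ⬝ᵥ (P *ᵥ x) = x ⬝ᵥ (P *ᵥ x) := by
  rw [dot_mulVec_left, hs, Matrix.mulVec_mulVec, hi]

lemma proj_dot_le {n : ℕ} (P : Matrix (Fin n) (Fin n) ℝ) (hs : Pᵀ = P) (hi : P * P = P)
    (x : Fin n → ℝ) : x ⬝ᵥ (P *ᵥ x) ≤ x ⬝ᵥ x := by
  have h1 : ((1 - P) *ᵥ x) ⬝ᵥ ((1 - P) *ᵥ x) = x ⬝ᵥ ((1 - P) *ᵥ x) := by
    refine proj_dot _ ?_ ?_ _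
    · simp [Matrix.transpose_sub, hs]
    · simp only [mul_sub, sub_mul, one_mul, mul_one, hi, sub_self, sub_zero]
  have h2 : 0 ≤ x ⬝ᵥ ((1 - P) *ᵥ x) := h1 ▸ dot_self_nonneg _
  rw [Matrix.sub_mulVec, Matrix.one_mulVec, dotProduct_sub] at h2
  linarith

lemma nrm_proj_le {n : ℕ} (P : Matrix (Fin n) (Fin n) ℝ) (hs : Pᵀ = P) (hi : P * P = P)
    (x : Fin n → ℝ) : nrm (P *ᵥ x) ≤ nrm x := by
  apply sqle (nrm_nonneg _) _ (nrm_nonneg _)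
  rw [nrm_sq, nrm_sq, proj_dot P hs hi]
  exact proj_dot_le P hs hi x

lemma frob_trace {m k : ℕ} (B : Matrix (Fin m) (Fin k) ℝ) :
    frobNorm B = Real.sqrt ((Bᵀ * B).trace) := by
  rw [frobNorm]
  congr 1
  rw [Matrix.trace]
  simp only [Matrix.diag_apply, Matrix.mul_apply, Matrix.transpose_apply]
  rw [Finset.sum_comm]
  apply Finset.sum_congr rfl
  intro i _
  apply Finset.sum_congr rfl
  intro j _
  ring
lemma polar (H : Matrix (Fin K) (Fin K) ℝ)
    (hcon : ∀ v : Fin K → ℝ, (H *ᵥ v) ⬝ᵥ (H *ᵥ v) ≤ v ⬝ᵥ v) :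
    ∃ O : Matrix (Fin K) (Fin K) ℝ, Oᵀ * O = 1 ∧
      (Hᵀ * H).trace ≤ (Oᵀ * H).trace := by
  classical
  have hS : (Hᵀ * H).IsHermitian := by simpa using isHermitian_conjTranspose_mul_self H
  set lam := hS.eigenvalues with hlam
  set v : Fin K → (Fin K → ℝ) := fun i => ⇑(hS.eigenvectorBasis i) with hv
  have hvdot : ∀ i j, v i ⬝ᵥ v j = if i = j then 1 else 0 := by
    intro i j
    have h2 := (orthonormal_iff_ite.mp hS.eigenvectorBasis.orthonormal) i j
    simpa [PiLp.inner_apply, RCLike.inner_apply, dotProduct, v, mul_comm] using h2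
  have hSv : ∀ i, (Hᵀ * H) *ᵥ v i = lam i • v i := fun i => hS.mulVec_eigenvectorBasis i
  have hHH : ∀ i j, (H *ᵥ v i) ⬝ᵥ (H *ᵥ v j) = lam j * (if i = j then 1 else 0) := by
    intro i j
    rw [dot_mulVec_left, Matrix.mulVec_mulVec, hSv j]
    simp [hvdot i j]
  have hlamdef : ∀ i, (H *ᵥ v i) ⬝ᵥ (H *ᵥ v i) = lam i := by
    intro i; rw [hHH]; simp
  have hlam0 : ∀ i, 0 ≤ lam i := fun i => (hlamdef i) ▸ dot_self_nonneg _
  have hlam1 : ∀ i, lam i ≤ 1 := by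
    intro i
    have h1 := hcon (v i)
    rw [hlamdef i] at h1
    simpa [hvdot i i] using h1
  set s : Set (Fin K) := {i | lam i ≠ 0} with hs
  set f : Fin K → EuclideanSpace ℝ (Fin K) :=
    fun i => (Real.sqrt (lam i))⁻¹ • (WithLp.equiv 2 (Fin K → ℝ)).symm (H *ᵥ v i) with hf
  have hfinner : ∀ i j, inner ℝ (f i) (f j) =
      (Real.sqrt (lam i))⁻¹ * ((Real.sqrt (lam j))⁻¹ * ((H *ᵥ v i) ⬝ᵥ (H *ᵥ v j))) := by
    intro i j
    have heq : inner ℝ ((WithLp.equiv 2 (Fin K → ℝ)).symm (H *ᵥ v i))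
        ((WithLp.equiv 2 (Fin K → ℝ)).symm (H *ᵥ v j)) = (H *ᵥ v i) ⬝ᵥ (H *ᵥ v j) := by
      simp [PiLp.inner_apply, RCLike.inner_apply, dotProduct, mul_comm]
    rw [hf]
    simp only [real_inner_smul_left, real_inner_smul_right]
    rw [heq]
    ring
  have hforth : Orthonormal ℝ (s.restrict f) := by
    rw [orthonormal_iff_ite]
    rintro ⟨i, hi⟩ ⟨j, hj⟩
    rw [show s.restrict f ⟨i, hi⟩ = f i from rfl, show s.restrict f ⟨j, hj⟩ = f j from rfl, hfinner i j, hHH i j]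
    by_cases hij : i = j
    · subst hij
      simp only [if_pos rfl, Subtype.mk_eq_mk, mul_one]
      have hpos : 0 < lam i := lt_of_le_of_ne (hlam0 i) (Ne.symm hi)
      have hsq : Real.sqrt (lam i) * Real.sqrt (lam i) = lam i := Real.mul_self_sqrt (hlam0 i)
      have hsne : Real.sqrt (lam i) ≠ 0 := by positivity
      field_simp
      rw [Real.sq_sqrt (hlam0 i)]
    · simp [hij, Subtype.mk_eq_mk]
  obtain ⟨b, hb⟩ := hforth.exists_orthonormalBasis_extension_of_card_eq (by simp)
  set BM : Matrix (Fin K) (Fin K) ℝ := Matrix.of (fun p i => b i p) with hBM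
  set VM : Matrix (Fin K) (Fin K) ℝ := Matrix.of (fun p i => v i p) with hVM
  have hVMo : VMᵀ * VM = 1 := by
    ext i j
    simpa [Matrix.mul_apply, dotProduct, VM, Matrix.one_apply] using hvdot i j
  have hBMo : BMᵀ * BM = 1 := by
    ext i j
    have h2 := (orthonormal_iff_ite.mp b.orthonormal) i j
    simp only [PiLp.inner_apply, RCLike.inner_apply, conj_trivial] at h2
    simpa [Matrix.mul_apply, BM, Matrix.one_apply, mul_comm] using h2
  have hVMo' : VM * VMᵀ = 1 := mul_eq_one_comm.mp hVMo
  have hHVM : ∀ p i, (H * VM) p i = (H *ᵥ v i) p := by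
    intro p i
    simp [Matrix.mul_apply, Matrix.mulVec, dotProduct, VM]
  refine ⟨BM * VMᵀ, ?_, ?_⟩
  · rw [Matrix.transpose_mul, Matrix.transpose_transpose, mul_assoc, ← mul_assoc BMᵀ, hBMo,
      one_mul, hVMo']
  · have htr1 : (Hᵀ * H).trace = ∑ i, lam i := by
      have key : (Hᵀ * H).trace = (VMᵀ * (Hᵀ * H) * VM).trace := by
        rw [Matrix.trace_mul_cycle, ← mul_assoc, hVMo', one_mul]
      rw [key, Matrix.trace]
      apply Finset.sum_congr rfl
      intro i _
      have hdiag : (VMᵀ * (Hᵀ * H) * VM) i i = v i ⬝ᵥ ((Hᵀ * H) *ᵥ v i) := by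
        rw [mul_assoc, Matrix.mul_apply, dotProduct]
        apply Finset.sum_congr rfl
        intro p _
        have h3 : ((Hᵀ * H) * VM) p i = ((Hᵀ * H) *ᵥ v i) p := by
          simp [Matrix.mul_apply, Matrix.mulVec, dotProduct, VM]
        rw [h3]
        rfl
      rw [Matrix.diag_apply, hdiag, hSv i]
      simp [hvdot i i]
    have htr2 : ((BM * VMᵀ)ᵀ * H).trace = ∑ i, Real.sqrt (lam i) := by
      have key : ((BM * VMᵀ)ᵀ * H).trace = (BMᵀ * (H * VM)).trace := by
        rw [Matrix.transpose_mul, Matrix.transpose_transpose, mul_assoc,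
          Matrix.trace_mul_comm, mul_assoc]
      rw [key, Matrix.trace]
      apply Finset.sum_congr rfl
      intro i _
      have hdiag : (BMᵀ * (H * VM)) i i = ∑ p, b i p * (H *ᵥ v i) p := by
        rw [Matrix.mul_apply]
        apply Finset.sum_congr rfl
        intro p _
        rw [hHVM p i]
        rfl
      rw [Matrix.diag_apply, hdiag]
      by_cases hi : lam i = 0
      · have h0 : (H *ᵥ v i) = 0 := by
          rw [← dotProduct_self_eq_zero (v := H *ᵥ v i), hlamdef i, hi]
        simp [h0, hi]
      · have hbi : b i = f i := hb i hi
        have hpos : 0 < lam i := lt_of_le_of_ne (hlam0 i) (Ne.symm hi)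
        have hsq : Real.sqrt (lam i) * Real.sqrt (lam i) = lam i := Real.mul_self_sqrt (hlam0 i)
        have hsne : Real.sqrt (lam i) ≠ 0 := by positivity
        have hfp : ∀ p, b i p = (Real.sqrt (lam i))⁻¹ * (H *ᵥ v i) p := by
          intro p; rw [hbi, hf]; rfl
        have h4 : ∑ p, b i p * (H *ᵥ v i) p
            = ∑ p, (Real.sqrt (lam i))⁻¹ * ((H *ᵥ v i) p * (H *ᵥ v i) p) := by
          apply Finset.sum_congr rfl
          intro p _
          rw [hfp p]; ring
        have hdot : (H *ᵥ v i) ⬝ᵥ (H *ᵥ v i) = ∑ p, (H *ᵥ v i) p * (H *ᵥ v i) p := rfl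
        rw [h4, ← Finset.mul_sum, ← hdot, hlamdef i]
        field_simp
        rw [Real.sq_sqrt (hlam0 i)]
    rw [htr1, htr2]
    apply Finset.sum_le_sum
    intro i _
    nlinarith [Real.sq_sqrt (hlam0 i), Real.sqrt_nonneg (lam i), hlam1 i, hlam0 i]

/-- Davis–Kahan: `Q` is symmetric of rank `K` with all its nonzero eigenvalues of
absolute value at least `γ > 0` (eigendecomposition `Q = U diag(d) Uᵀ`, `U` with
orthonormal columns); `M = W diag(μ) Wᵀ` is any symmetric matrix with `Û` the `K`
leading eigenvectors of `M` (largest eigenvalues in absolute value).  Then for some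
orthogonal `O`, `‖Û − U O‖_F ≤ 2√(2K)·‖M − Q‖₂/γ`. -/
theorem stmt16 (n K : ℕ) (γ : ℝ) (hγ : 0 < γ)
    (Q M : Matrix (Fin n) (Fin n) ℝ)
    (U Uhat : Matrix (Fin n) (Fin K) ℝ) (d : Fin K → ℝ)
    (hU : Uᵀ * U = 1) (hQ : Q = U * Matrix.diagonal d * Uᵀ)
    (hd : ∀ k, γ ≤ |d k|)
    (W : Matrix (Fin n) (Fin n) ℝ) (μ : Fin n → ℝ) (σ : Fin K → Fin n)
    (hW : Wᵀ * W = 1) (hM : M = W * Matrix.diagonal μ * Wᵀ)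
    (hσ : Function.Injective σ)
    (hUhat : ∀ i k, Uhat i k = W i (σ k))
    (hlead : ∀ k, ∀ j, j ∉ Set.range σ → |μ j| ≤ |μ (σ k)|) :
    ∃ O : Matrix (Fin K) (Fin K) ℝ, Oᵀ * O = 1 ∧
      frobNorm (Uhat - U * O) ≤ 2 * Real.sqrt (2 * K) * specNorm (M - Q) / γ := by
  classical
  set ε := specNorm (M - Q) with hε
  have hε0 : 0 ≤ ε := norm_nonneg _
  set uc : Fin K → (Fin n → ℝ) := fun k => fun i => U i k with huc
  have hucdot : ∀ k l, uc k ⬝ᵥ uc l = if k = l then 1 else 0 := by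
    intro k l
    have h2 := congrFun (congrFun hU k) l
    simpa [Matrix.mul_apply, dotProduct, Matrix.one_apply, uc] using h2
  have hnuc : ∀ k, nrm (uc k) = 1 := by
    intro k
    rw [nrm_eq_sqrt, hucdot k k, if_pos rfl, Real.sqrt_one]
  have hWW : W * Wᵀ = 1 := mul_eq_one_comm.mp hW
  have hUhU : Uhatᵀ * Uhat = 1 := by
    ext k l
    have h2 := congrFun (congrFun hW (σ k)) (σ l)
    simp only [Matrix.mul_apply, Matrix.transpose_apply, Matrix.one_apply] at h2 ⊢
    simp only [hUhat]
    rw [h2]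
    simp [hσ.eq_iff]
  have hWnorm : ∀ z : Fin n → ℝ, (W *ᵥ z) ⬝ᵥ (W *ᵥ z) = z ⬝ᵥ z := by
    intro z; rw [dot_mulVec_left, Matrix.mulVec_mulVec, hW, Matrix.one_mulVec]
  have hWtnorm : ∀ z : Fin n → ℝ, (Wᵀ *ᵥ z) ⬝ᵥ (Wᵀ *ᵥ z) = z ⬝ᵥ z := by
    intro z
    rw [dot_mulVec_left, Matrix.transpose_transpose, Matrix.mulVec_mulVec, hWW,
      Matrix.one_mulVec]
  have hdiagvec : ∀ (g : Fin n → ℝ) (z : Fin n → ℝ) (l : Fin n),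
      (Matrix.diagonal g *ᵥ z) l = g l * z l := by
    intro g z l
    simp [Matrix.mulVec, Matrix.diagonal, dotProduct, Finset.sum_ite_eq]
  -- step (a): eigenvalues outside the leading set are ≤ ε
  have hout : ∀ j, j ∉ Set.range σ → |μ j| ≤ ε := by
    intro j hj
    by_contra hcon
    push_neg at hcon
    set τ : Fin (K+1) → Fin n := Fin.snoc σ j with hτ
    have hτc : ∀ i : Fin K, τ i.castSucc = σ i := fun i => by simp [hτ]
    have hτl : τ (Fin.last K) = j := by simp [hτ]
    have hτinj : Function.Injective τ := by
      intro a b hab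
      rcases Fin.eq_castSucc_or_eq_last a with ⟨a', rfl⟩ | rfl <;>
        rcases Fin.eq_castSucc_or_eq_last b with ⟨b', rfl⟩ | rfl
      · rw [hτc, hτc] at hab; exact congrArg _ (hσ hab)
      · rw [hτc, hτl] at hab; exact (hj ⟨a', hab⟩).elim
      · rw [hτl, hτc] at hab; exact (hj ⟨b', hab.symm⟩).elim
      · rfl
    have hτμ : ∀ i, ε < |μ (τ i)| := by
      intro i
      rcases Fin.eq_castSucc_or_eq_last i with ⟨i', rfl⟩ | rfl
      · rw [hτc]; exact lt_of_lt_of_le hcon (hlead i' j hj)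
      · rw [hτl]; exact hcon
    set A2 : Matrix (Fin (K+1)) (Fin (K+1)) ℝ :=
      Matrix.of (fun p q => if h : (p : ℕ) < K then (Uᵀ * W) ⟨(p : ℕ), h⟩ (τ q) else 0) with hA2
    have hdet : A2.det = 0 := by
      apply Matrix.det_eq_zero_of_row_eq_zero (Fin.last K)
      intro q
      simp [A2, Fin.val_last]
    obtain ⟨c, hc0, hcv⟩ := Matrix.exists_mulVec_eq_zero_iff.mpr hdet
    set c' : Fin n → ℝ := fun l => ∑ i, if l = τ i then c i else 0 with hc'
    have hc'τ : ∀ i, c' (τ i) = c i := by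
      intro i
      rw [hc']
      simp only [hτinj.eq_iff]
      rw [Finset.sum_ite_eq Finset.univ i c]
      simp
    have hc'0 : ∀ l, l ∉ Set.range τ → c' l = 0 := by
      intro l hl
      rw [hc']
      apply Finset.sum_eq_zero
      intro i _
      exact if_neg fun h => hl ⟨i, h.symm⟩
    set vv := W *ᵥ c' with hvv
    have hUv : Uᵀ *ᵥ vv = 0 := by
      rw [hvv, Matrix.mulVec_mulVec]
      ext k
      have hAc := congrFun hcv ⟨(k : ℕ), lt_trans k.isLt (Nat.lt_succ_self K)⟩
      have hrow : ∀ q, A2 ⟨(k : ℕ), lt_trans k.isLt (Nat.lt_succ_self K)⟩ q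
          = (Uᵀ * W) k (τ q) := by
        intro q
        simp [A2, k.isLt]
      have hAc2 : ∑ q, (Uᵀ * W) k (τ q) * c q = 0 := by
        rw [Matrix.mulVec, dotProduct] at hAc
        calc ∑ q, (Uᵀ * W) k (τ q) * c q
            = ∑ q, A2 ⟨(k : ℕ), lt_trans k.isLt (Nat.lt_succ_self K)⟩ q * c q := by
              apply Finset.sum_congr rfl
              intro q _
              rw [hrow q]
          _ = 0 := hAc
      have hexp : ((Uᵀ * W) *ᵥ c') k = ∑ q, (Uᵀ * W) k (τ q) * c q := by
        rw [Matrix.mulVec, dotProduct]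
        have : ∀ l, (Uᵀ * W) k l * c' l = ∑ i, if l = τ i then (Uᵀ * W) k l * c i else 0 := by
          intro l
          rw [hc', Finset.mul_sum]
          apply Finset.sum_congr rfl
          intro i _
          rw [mul_ite, mul_zero]
        rw [Finset.sum_congr rfl fun l _ => this l, Finset.sum_comm]
        apply Finset.sum_congr rfl
        intro i _
        rw [Finset.sum_ite_eq' Finset.univ (τ i) (fun l => (Uᵀ * W) k l * c i)]
        simp
      rw [hexp, hAc2]
      rfl
    have hQv : Q *ᵥ vv = 0 := by
      rw [hQ, ← Matrix.mulVec_mulVec, hUv, Matrix.mulVec_zero]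
    have hMv : M *ᵥ vv = W *ᵥ (Matrix.diagonal μ *ᵥ c') := by
      rw [hM, hvv]
      have hin : Wᵀ *ᵥ (W *ᵥ c') = c' := by
        rw [Matrix.mulVec_mulVec, hW, Matrix.one_mulVec]
      rw [← Matrix.mulVec_mulVec, ← Matrix.mulVec_mulVec, hin]
    have hMQv : (M - Q) *ᵥ vv = M *ᵥ vv := by
      rw [Matrix.sub_mulVec, hQv, sub_zero]
    have hnb : nrm (M *ᵥ vv) ≤ ε * nrm vv := by
      rw [← hMQv]; exact nrm_mulVec_le (M - Q) vv
    have hsq1 : (M *ᵥ vv) ⬝ᵥ (M *ᵥ vv) = ∑ l, (μ l * c' l) * (μ l * c' l) := by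
      rw [hMv, hWnorm]
      apply Finset.sum_congr rfl
      intro l _
      rw [hdiagvec μ c' l]
    have hsq2 : vv ⬝ᵥ vv = ∑ l, c' l * c' l := by
      rw [hvv, hWnorm]; rfl
    have hup : (M *ᵥ vv) ⬝ᵥ (M *ᵥ vv) ≤ ε ^ 2 * (vv ⬝ᵥ vv) := by
      have h5 : nrm (M *ᵥ vv) ^ 2 ≤ (ε * nrm vv) ^ 2 := by
        apply pow_le_pow_left₀ (nrm_nonneg _) hnb
      rw [nrm_sq, mul_pow, nrm_sq] at h5
      exact h5
    obtain ⟨i0, hi0⟩ := Function.ne_iff.mp hc0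
    have hlow : ε ^ 2 * (vv ⬝ᵥ vv) < (M *ᵥ vv) ⬝ᵥ (M *ᵥ vv) := by
      rw [hsq1, hsq2, Finset.mul_sum]
      apply Finset.sum_lt_sum
      · intro l _
        by_cases hl : l ∈ Set.range τ
        · obtain ⟨i, rfl⟩ := hl
          have h6 : ε ^ 2 ≤ μ (τ i) * μ (τ i) := by
            nlinarith [hτμ i, abs_nonneg (μ (τ i)), sq_abs (μ (τ i)), hε0]
          calc ε ^ 2 * (c' (τ i) * c' (τ i)) ≤ (μ (τ i) * μ (τ i)) * (c' (τ i) * c' (τ i)) :=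
                mul_le_mul_of_nonneg_right h6 (mul_self_nonneg _)
            _ = (μ (τ i) * c' (τ i)) * (μ (τ i) * c' (τ i)) := by ring
        · rw [hc'0 l hl]; simp
      · refine ⟨τ i0, Finset.mem_univ _, ?_⟩
        have hcne : c' (τ i0) ≠ 0 := by rw [hc'τ i0]; simpa using hi0
        have h6 : ε ^ 2 < μ (τ i0) * μ (τ i0) := by
          nlinarith [hτμ i0, abs_nonneg (μ (τ i0)), sq_abs (μ (τ i0)), hε0]
        have h7 : 0 < c' (τ i0) * c' (τ i0) := mul_self_pos.mpr hcne
        calc ε ^ 2 * (c' (τ i0) * c' (τ i0)) < (μ (τ i0) * μ (τ i0)) * (c' (τ i0) * c' (τ i0)) :=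
              mul_lt_mul_of_pos_right h6 h7
          _ = (μ (τ i0) * c' (τ i0)) * (μ (τ i0) * c' (τ i0)) := by ring
    linarith
  -- projection machinery
  set A := Uhat * Uhatᵀ with hA
  have hAsymm : Aᵀ = A := by rw [hA, Matrix.transpose_mul, Matrix.transpose_transpose]
  have hAidem : A * A = A := by rw [hA, Matrix.mul_assoc, ← Matrix.mul_assoc Uhatᵀ, hUhU, Matrix.one_mul]
  set P := (1 : Matrix (Fin n) (Fin n) ℝ) - A with hP
  have hPsymm : Pᵀ = P := by rw [hP, Matrix.transpose_sub, Matrix.transpose_one, hAsymm]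
  have hPidem : P * P = P := by
    rw [hP]
    simp only [mul_sub, sub_mul, Matrix.one_mul, Matrix.mul_one, hAidem, sub_self, sub_zero]
  have hMsymm : Mᵀ = M := by
    rw [hM]
    simp [Matrix.transpose_mul, Matrix.diagonal_transpose, Matrix.mul_assoc]
  have hMW : M * W = W * Matrix.diagonal μ := by
    rw [hM, Matrix.mul_assoc, hW, Matrix.mul_one]
  have hMUhat : M * Uhat = Uhat * Matrix.diagonal (fun k => μ (σ k)) := by
    ext i k
    have h2 := congrFun (congrFun hMW i) (σ k)
    rw [Matrix.mul_diagonal] at h2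
    rw [Matrix.mul_diagonal]
    simp only [Matrix.mul_apply, hUhat] at h2 ⊢
    exact h2
  have hPM : P * M = M * P := by
    have h1 : M * A = Uhat * Matrix.diagonal (fun k => μ (σ k)) * Uhatᵀ := by
      rw [hA, ← Matrix.mul_assoc, hMUhat]
    have h3 : Uhatᵀ * M = Matrix.diagonal (fun k => μ (σ k)) * Uhatᵀ := by
      have h4 := congrArg Matrix.transpose hMUhat
      rw [Matrix.transpose_mul, Matrix.transpose_mul, hMsymm, Matrix.diagonal_transpose] at h4
      exact h4
    have h2 : A * M = Uhat * Matrix.diagonal (fun k => μ (σ k)) * Uhatᵀ := by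
      rw [hA, Matrix.mul_assoc, h3, ← Matrix.mul_assoc]
    rw [hP, sub_mul, mul_sub, Matrix.one_mul, Matrix.mul_one, h1, h2]
  have hQU : Q * U = U * Matrix.diagonal d := by
    rw [hQ, Matrix.mul_assoc, hU, Matrix.mul_one]
  have hQuc : ∀ k, Q *ᵥ uc k = d k • uc k := by
    intro k; ext i
    have h2 := congrFun (congrFun hQU i) k
    rw [Matrix.mul_diagonal] at h2
    simp only [Matrix.mul_apply] at h2
    simpa [Matrix.mulVec, dotProduct, uc, mul_comm] using h2
  set x : Fin K → (Fin n → ℝ) := fun k => P *ᵥ uc k with hx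
  -- the per-column inequality
  have hcol : ∀ k, γ * nrm (x k) ≤ ε + ε * nrm (x k) := by
    intro k
    have hsplit : d k • x k = P *ᵥ ((Q - M) *ᵥ uc k) + M *ᵥ (x k) := by
      have h1 : P *ᵥ (Q *ᵥ uc k) = d k • x k := by
        rw [hQuc k, Matrix.mulVec_smul, hx]
      have h2 : P *ᵥ (M *ᵥ uc k) = M *ᵥ (x k) := by
        rw [Matrix.mulVec_mulVec, hPM, ← Matrix.mulVec_mulVec, hx]
      have h3 : Q *ᵥ uc k = (Q - M) *ᵥ uc k + M *ᵥ uc k := by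
        rw [Matrix.sub_mulVec, sub_add_cancel]
      rw [← h1, h3, Matrix.mulVec_add, h2]
    have hn1 : nrm (P *ᵥ ((Q - M) *ᵥ uc k)) ≤ ε := by
      have h4 : nrm (P *ᵥ ((Q - M) *ᵥ uc k)) ≤ nrm ((Q - M) *ᵥ uc k) :=
        nrm_proj_le P hPsymm hPidem _
      have h5 : (Q - M) *ᵥ uc k = -((M - Q) *ᵥ uc k) := by
        rw [← Matrix.neg_mulVec, neg_sub]
      have h6 : nrm ((Q - M) *ᵥ uc k) ≤ ε := by
        rw [h5, nrm_neg]
        calc nrm ((M - Q) *ᵥ uc k) ≤ specNorm (M - Q) * nrm (uc k) := nrm_mulVec_le _ _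
          _ = ε := by rw [hnuc k, mul_one, hε]
      exact le_trans h4 h6
    have hn2 : nrm (M *ᵥ x k) ≤ ε * nrm (x k) := by
      set y := Wᵀ *ᵥ (x k) with hy
      have hUhx : Uhatᵀ *ᵥ (x k) = 0 := by
        have h7 : Uhatᵀ * P = 0 := by
          rw [hP, Matrix.mul_sub, Matrix.mul_one, hA, ← Matrix.mul_assoc, hUhU, Matrix.one_mul,
            sub_self]
        rw [hx, Matrix.mulVec_mulVec, h7, Matrix.zero_mulVec]
      have hyz : ∀ l, l ∈ Set.range σ → y l = 0 := by
        rintro l ⟨k', rfl⟩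
        have h8 : y (σ k') = (Uhatᵀ *ᵥ (x k)) k' := by
          rw [hy]
          simp only [Matrix.mulVec, dotProduct, Matrix.transpose_apply, hUhat]
        rw [h8, hUhx]
        rfl
      have hMx : M *ᵥ (x k) = W *ᵥ (Matrix.diagonal μ *ᵥ y) := by
        rw [hM, hy, ← Matrix.mulVec_mulVec, ← Matrix.mulVec_mulVec]
      have h9 : (M *ᵥ (x k)) ⬝ᵥ (M *ᵥ (x k)) = ∑ l, (μ l * y l) * (μ l * y l) := by
        rw [hMx, hWnorm]
        apply Finset.sum_congr rfl
        intro l _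
        rw [hdiagvec μ y l]
      have h10 : ∑ l, (μ l * y l) * (μ l * y l) ≤ ε ^ 2 * ∑ l, y l * y l := by
        rw [Finset.mul_sum]
        apply Finset.sum_le_sum
        intro l _
        by_cases hl : l ∈ Set.range σ
        · rw [hyz l hl]; simp
        · have h11 : μ l * μ l ≤ ε ^ 2 := by
            nlinarith [hout l hl, abs_nonneg (μ l), sq_abs (μ l), hε0]
          nlinarith [mul_self_nonneg (y l)]
      have h12 : ∑ l, y l * y l = (x k) ⬝ᵥ (x k) := by
        rw [hy]
        have := hWtnorm (x k)
        rw [← this]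
        rfl
      apply sqle (mul_nonneg hε0 (nrm_nonneg _)) _ (nrm_nonneg _)
      rw [nrm_sq, mul_pow, nrm_sq, h9]
      calc ∑ l, (μ l * y l) * (μ l * y l) ≤ ε ^ 2 * ∑ l, y l * y l := h10
        _ = ε ^ 2 * ((x k) ⬝ᵥ (x k)) := by rw [h12]
    calc γ * nrm (x k) ≤ |d k| * nrm (x k) :=
          mul_le_mul_of_nonneg_right (hd k) (nrm_nonneg _)
      _ = nrm (d k • x k) := (nrm_smul _ _).symm
      _ = nrm (P *ᵥ ((Q - M) *ᵥ uc k) + M *ᵥ (x k)) := by rw [hsplit]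
      _ ≤ nrm (P *ᵥ ((Q - M) *ᵥ uc k)) + nrm (M *ᵥ (x k)) := nrm_add_le _ _
      _ ≤ ε + ε * nrm (x k) := add_le_add hn1 hn2
  -- polar decomposition of H = Uᵀ * Uhat
  set H := Uᵀ * Uhat with hH
  have hHcon : ∀ z : Fin K → ℝ, (H *ᵥ z) ⬝ᵥ (H *ᵥ z) ≤ z ⬝ᵥ z := by
    intro z
    have h1 : H *ᵥ z = Uᵀ *ᵥ (Uhat *ᵥ z) := by rw [Matrix.mulVec_mulVec]
    have hUUs : (U * Uᵀ)ᵀ = U * Uᵀ := by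
      rw [Matrix.transpose_mul, Matrix.transpose_transpose]
    have hUUi : (U * Uᵀ) * (U * Uᵀ) = U * Uᵀ := by
      rw [Matrix.mul_assoc, ← Matrix.mul_assoc Uᵀ, hU, Matrix.one_mul]
    have h2 : (H *ᵥ z) ⬝ᵥ (H *ᵥ z) ≤ (Uhat *ᵥ z) ⬝ᵥ (Uhat *ᵥ z) := by
      rw [h1, dot_mulVec_left, Matrix.transpose_transpose, Matrix.mulVec_mulVec]
      exact proj_dot_le (U * Uᵀ) hUUs hUUi (Uhat *ᵥ z)
    have h3 : (Uhat *ᵥ z) ⬝ᵥ (Uhat *ᵥ z) = z ⬝ᵥ z := by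
      rw [dot_mulVec_left, Matrix.mulVec_mulVec, hUhU, Matrix.one_mulVec]
    rw [h3] at h2
    exact h2
  obtain ⟨O, hO, htr⟩ := polar H hHcon
  refine ⟨O, hO, ?_⟩
  -- trace identities
  have htrHH0 : 0 ≤ (Hᵀ * H).trace := by
    rw [Matrix.trace]
    apply Finset.sum_nonneg
    intro l _
    simp only [Matrix.diag_apply, Matrix.mul_apply, Matrix.transpose_apply]
    exact Finset.sum_nonneg fun _ _ => mul_self_nonneg _
  have htrexp : ((Uhat - U * O)ᵀ * (Uhat - U * O)).trace = 2 * K - 2 * (Oᵀ * H).trace := by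
    have e1 : (Uhat - U * O)ᵀ * (Uhat - U * O)
        = Uhatᵀ * Uhat - Uhatᵀ * (U * O) - ((U * O)ᵀ * Uhat - (U * O)ᵀ * (U * O)) := by
      rw [Matrix.transpose_sub, Matrix.sub_mul, Matrix.mul_sub, Matrix.mul_sub]
    have e2 : (U * O)ᵀ * (U * O) = (1 : Matrix (Fin K) (Fin K) ℝ) := by
      rw [Matrix.transpose_mul, Matrix.mul_assoc, ← Matrix.mul_assoc Uᵀ, hU, Matrix.one_mul, hO]
    have e3 : (U * O)ᵀ * Uhat = Oᵀ * H := by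
      rw [Matrix.transpose_mul, Matrix.mul_assoc, hH]
    have e4 : (Uhatᵀ * (U * O)).trace = (Oᵀ * H).trace := by
      rw [← Matrix.trace_transpose, Matrix.transpose_mul, Matrix.transpose_transpose, e3]
    rw [e1, Matrix.trace_sub, Matrix.trace_sub, Matrix.trace_sub, hUhU, e2, e3, e4,
      Matrix.trace_one]
    simp only [Fintype.card_fin]
    ring
  have hxd : ∀ k, x k ⬝ᵥ x k = 1 - (Uhatᵀ *ᵥ uc k) ⬝ᵥ (Uhatᵀ *ᵥ uc k) := by
    intro k
    rw [hx, proj_dot P hPsymm hPidem]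
    have h1 : P *ᵥ uc k = uc k - A *ᵥ uc k := by
      rw [hP, Matrix.sub_mulVec, Matrix.one_mulVec]
    rw [h1, dotProduct_sub, hucdot k k, if_pos rfl]
    congr 1
    rw [hA, ← Matrix.mulVec_mulVec, dotProduct_comm, dot_mulVec_left]
  have hsum : (Hᵀ * H).trace = K - ∑ k, (x k ⬝ᵥ x k) := by
    have h2 : ∀ k l, (Uhatᵀ *ᵥ uc k) l = H k l := by
      intro k l
      rw [hH]
      simp only [Matrix.mulVec, dotProduct, Matrix.transpose_apply, Matrix.mul_apply, uc]
      exact Finset.sum_congr rfl fun i _ => mul_comm _ _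
    have h3 : (Hᵀ * H).trace = ∑ k, ∑ l, H k l * H k l := by
      rw [Matrix.trace]
      simp only [Matrix.diag_apply, Matrix.mul_apply, Matrix.transpose_apply]
      rw [Finset.sum_comm]
    have h5 : ∑ k, (x k ⬝ᵥ x k) = ∑ k : Fin K, ((1:ℝ) - ∑ l, H k l * H k l) := by
      apply Finset.sum_congr rfl
      intro k _
      rw [hxd k]
      congr 1
      rw [dotProduct]
      exact Finset.sum_congr rfl fun l _ => by rw [h2 k l]
    rw [h5, Finset.sum_sub_distrib, Finset.sum_const, Finset.card_univ, Fintype.card_fin, h3,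
      nsmul_eq_mul, mul_one]
    ring
  -- final assembly
  rw [frob_trace, htrexp]
  set t := (Oᵀ * H).trace with ht
  have hts : (Hᵀ * H).trace ≤ t := htr
  by_cases hcase : γ ≤ 2 * ε
  · have h1 : 2 * (K:ℝ) - 2 * t ≤ 2 * K := by linarith
    have h3 : (1:ℝ) ≤ 2 * ε / γ := by
      rw [le_div_iff₀ hγ]; linarith
    calc Real.sqrt (2 * (K:ℝ) - 2 * t) ≤ Real.sqrt (2 * K) := Real.sqrt_le_sqrt h1
      _ = Real.sqrt (2 * K) * 1 := (mul_one _).symm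
      _ ≤ Real.sqrt (2 * K) * (2 * ε / γ) := mul_le_mul_of_nonneg_left h3 (Real.sqrt_nonneg _)
      _ = 2 * Real.sqrt (2 * K) * ε / γ := by ring
  · push_neg at hcase
    have hxk : ∀ k, nrm (x k) ≤ 2 * ε / γ := by
      intro k
      have h4 := hcol k
      rw [le_div_iff₀ hγ]
      have hp : 2 * ε * nrm (x k) ≤ γ * nrm (x k) :=
        mul_le_mul_of_nonneg_right (le_of_lt hcase) (nrm_nonneg (x k))
      linarith
    have hsumle : ∑ k, (x k ⬝ᵥ x k) ≤ K * (2 * ε / γ)^2 := by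
      calc ∑ k, (x k ⬝ᵥ x k) ≤ ∑ _k : Fin K, (2 * ε / γ)^2 := by
            apply Finset.sum_le_sum
            intro k _
            rw [← nrm_sq]
            exact pow_le_pow_left₀ (nrm_nonneg _) (hxk k) 2
        _ = K * (2 * ε / γ)^2 := by
            rw [Finset.sum_const, Finset.card_univ, Fintype.card_fin, nsmul_eq_mul]
    have h6 : 2 * (K:ℝ) - 2 * t ≤ 2 * K * (2 * ε / γ)^2 := by
      linarith [hts, hsumle, hsum]
    calc Real.sqrt (2 * (K:ℝ) - 2 * t) ≤ Real.sqrt (2 * K * (2 * ε / γ)^2) :=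
          Real.sqrt_le_sqrt h6
      _ = Real.sqrt (2 * K) * (2 * ε / γ) := by
          rw [Real.sqrt_mul (by positivity), Real.sqrt_sq (by positivity)]
      _ = 2 * Real.sqrt (2 * K) * ε / γ := by ring
end

section
/- Let V ∈ ℝ^{n×K} have orthonormal columns with rows taking exactly K distinct values, where rows in community k (of size n_k) share a common value and distinct communities k ≠ l have row values at Euclidean distance √(1/n_k + 1/n_l). Let V' ∈ ℝ^{n×K} be any matrix with at most K distinct rows such that ‖V'_{i·} − V_{i·}‖₂ < τ/2 for all i in a set T that intersects every community, where τ = min_{k≠l} √(1/n_k + 1/n_l). Then for i, j ∈ T: V'_{i·} = V'_{j·} if and only if i and j are in the same community. -/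
open Matrix

/-- Nodes outside the misclassified set are correctly clustered: `V` has orthonormal
columns, rows constant within communities and separated across communities by
`√(1/n_k + 1/n_l)`; `V'` has at most `K` distinct rows; `T` meets every community and
every row of `V'` indexed by `T` is within `τ/2` of the corresponding row of `V`,
where `τ = min_{k≠l} √(1/n_k + 1/n_l)`.  Then for `i, j ∈ T`, the rows `V'_{i·}` and
`V'_{j·}` coincide iff `i` and `j` are in the same community. -/
theorem stmt19 (n K : ℕ) (g : Fin n → Fin K)
    (hk : ∀ k, 0 < (Finset.univ.filter (fun i => g i = k)).card)
    (V V' : Matrix (Fin n) (Fin K) ℝ)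
    (hVorth : Vᵀ * V = 1)
    (hsame : ∀ i j, g i = g j → ∀ m, V i m = V j m)
    (hsep : ∀ i j, g i ≠ g j →
      Real.sqrt (∑ m, (V i m - V j m) ^ 2) =
        Real.sqrt (1 / (Finset.univ.filter (fun i' => g i' = g i)).card +
                   1 / (Finset.univ.filter (fun i' => g i' = g j)).card))
    (hKrows : (Set.range fun i => (V' i : Fin K → ℝ)).ncard ≤ K)
    (T : Finset (Fin n)) (hT : ∀ k, ∃ i ∈ T, g i = k)
    (hclose : ∀ i ∈ T, ∀ k l : Fin K, k ≠ l →
      Real.sqrt (∑ m, (V' i m - V i m) ^ 2) <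
        Real.sqrt (1 / (Finset.univ.filter (fun i' => g i' = k)).card +
                   1 / (Finset.univ.filter (fun i' => g i' = l)).card) / 2) :
    ∀ i ∈ T, ∀ j ∈ T, ((∀ m, V' i m = V' j m) ↔ g i = g j) := by
  classical
  choose rep hrepT hrepg using hT
  set e : (Fin K → ℝ) → EuclideanSpace ℝ (Fin K) := ⇑(WithLp.equiv 2 (Fin K → ℝ)).symm with he
  have hdist : ∀ x y : Fin K → ℝ,
      dist (e x) (e y) = Real.sqrt (∑ m, (x m - y m) ^ 2) := by
    intro x y
    rw [EuclideanSpace.dist_eq]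
    congr 1
    refine Finset.sum_congr rfl fun m _ => ?_
    rw [Real.dist_eq, sq_abs]
    rfl
  -- separation: distinct communities in T have distinct V' rows
  have sep' : ∀ i ∈ T, ∀ j ∈ T, g i ≠ g j → (V' i : Fin K → ℝ) ≠ V' j := by
    intro i hi j hj hgij heq
    have h1 := hclose i hi (g i) (g j) hgij
    have h2 := hclose j hj (g i) (g j) hgij
    have h3 := hsep i j hgij
    rw [← hdist (V' i) (V i)] at h1
    rw [← hdist (V' j) (V j)] at h2
    rw [← hdist (V i) (V j)] at h3
    have tri : dist (e (V i)) (e (V j)) ≤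
        dist (e (V' i)) (e (V i)) + dist (e (V' j)) (e (V j)) := by
      calc dist (e (V i)) (e (V j))
          ≤ dist (e (V i)) (e (V' i)) + dist (e (V' i)) (e (V j)) := dist_triangle _ _ _
        _ = dist (e (V' i)) (e (V i)) + dist (e (V' j)) (e (V j)) := by
            rw [heq, dist_comm (e (V i))]
    rw [h3] at tri
    linarith
  -- counting: the rows at representatives exhaust all rows of V'
  set f : Fin K → (Fin K → ℝ) := fun k => (V' (rep k) : Fin K → ℝ) with hf
  have finj : Function.Injective f := by
    intro k k' h
    by_contra hne
    exact sep' (rep k) (hrepT k) (rep k') (hrepT k') (by rwa [hrepg, hrepg]) h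
  have hScard : (Set.range f).ncard = K := by
    rw [Set.ncard_eq_toFinset_card', Set.toFinset_range,
      Finset.card_image_of_injective _ finj, Finset.card_univ, Fintype.card_fin]
  have hsub : Set.range f ⊆ Set.range fun i => (V' i : Fin K → ℝ) := by
    rintro _ ⟨k, rfl⟩; exact ⟨rep k, rfl⟩
  have heqset : Set.range f = Set.range fun i => (V' i : Fin K → ℝ) :=
    Set.eq_of_subset_of_ncard_le hsub (by rw [hScard]; exact hKrows)
      (Set.finite_range _)
  -- every row of V' in T equals the row of its community's representative
  have key : ∀ i ∈ T, (V' i : Fin K → ℝ) = f (g i) := by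
    intro i hi
    have : (V' i : Fin K → ℝ) ∈ Set.range f := heqset ▸ ⟨i, rfl⟩
    obtain ⟨k, hkk⟩ := this
    have hkg : k = g i := by
      by_contra hne
      exact sep' (rep k) (hrepT k) i hi (by rw [hrepg]; exact hne) hkk
    rw [← hkg]; exact hkk.symm
  intro i hi j hj
  constructor
  · intro h
    by_contra hne
    exact sep' i hi j hj hne (funext h)
  · intro hg m
    have h1 := key i hi
    have h2 := key j hj
    rw [hg] at h1
    rw [show V' i m = (V' i : Fin K → ℝ) m from rfl, h1, h2]
end
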